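/- For every real x with 0 < x < 1.371, one has (tan x)/x < (π² − (4 − π²/3)x² − (4/3 − 2π²/15)x⁴)/(π² − 4x²). -/

import Mathlib

/-!
Clearing denominators, the inequality reads `0 < π² A + B` with
`A = x cos x (1 + x²/3 + 2x⁴/15) - sin x = cos x · (x + x³/3 + 2x⁵/15 - tan x)` and
`B = 4x² sin x - (4x³ + 4x⁵/3) cos x = 4x² cos x · (tan x - x - x³/3)`.
On `[0, ∞)` the Taylor partial sums of `sin` and `cos` bound them alternately from above and
below (integrate `1 - cos ≥ 0` repeatedly), which gives polynomial lower bounds for `A` and `B`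
starting with `-17/315 x⁷` and `8/15 x⁷`. As `π² < 9.87 < (8/15)/(17/315)`, the resulting
polynomial lower bound for `π² A + B` stays positive up to `x = 1.371`.
-/

open Real Finset
open scoped Nat

noncomputable def cosTaylor (n : ℕ) (x : ℝ) : ℝ :=
  ∑ k ∈ range n, (-1) ^ k * x ^ (2 * k) / (2 * k)!

noncomputable def sinTaylor (n : ℕ) (x : ℝ) : ℝ :=
  ∑ k ∈ range n, (-1) ^ k * x ^ (2 * k + 1) / (2 * k + 1)!

theorem hasDerivAt_sinTaylor (n : ℕ) (x : ℝ) :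
    HasDerivAt (sinTaylor n) (cosTaylor n x) x := by
  unfold sinTaylor cosTaylor
  refine HasDerivAt.fun_sum fun k _ => ?_
  refine (((hasDerivAt_pow (2 * k + 1) x).const_mul ((-1 : ℝ) ^ k)).div_const
    ((2 * k + 1)! : ℝ)).congr_deriv ?_
  rw [Nat.factorial_succ]
  push_cast
  field_simp

theorem hasDerivAt_cosTaylor_succ (n : ℕ) (x : ℝ) :
    HasDerivAt (cosTaylor (n + 1)) (-sinTaylor n x) x := by
  have hsplit : cosTaylor (n + 1) = fun y =>
      ∑ k ∈ range n, (-1 : ℝ) ^ (k + 1) * y ^ (2 * k + 2) / (2 * k + 2)! + 1 := by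
    ext y
    simp only [cosTaylor, sum_range_succ']
    simp [mul_add]
  rw [hsplit, sinTaylor, ← sum_neg_distrib]
  refine (HasDerivAt.fun_sum fun k _ => ?_).add_const 1
  refine (((hasDerivAt_pow (2 * k + 2) x).const_mul ((-1 : ℝ) ^ (k + 1))).div_const
    ((2 * k + 2)! : ℝ)).congr_deriv ?_
  rw [Nat.factorial_succ (2 * k + 1)]
  push_cast
  field_simp
  ring

theorem sinTaylor_zero_right (n : ℕ) : sinTaylor n 0 = 0 := by
  simp [sinTaylor]

theorem cosTaylor_succ_zero_right (n : ℕ) : cosTaylor (n + 1) 0 = 1 := by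
  simp [cosTaylor, sum_range_succ']

theorem nonneg_of_hasDerivAt_nonneg {f f' : ℝ → ℝ} (hf : ∀ y, HasDerivAt f (f' y) y)
    (hf' : ∀ y, 0 ≤ y → 0 ≤ f' y) (h0 : f 0 = 0) {x : ℝ} (hx : 0 ≤ x) : 0 ≤ f x := by
  have hmono : MonotoneOn f (Set.Ici 0) := by
    refine monotoneOn_of_hasDerivWithinAt_nonneg (convex_Ici 0)
      (fun y _ => (hf y).continuousAt.continuousWithinAt)
      (fun y _ => (hf y).hasDerivWithinAt) fun y hy => hf' y ?_
    rw [interior_Ici] at hy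
    exact le_of_lt hy
  simpa [h0] using hmono Set.self_mem_Ici hx hx

theorem mul_sin_sub_sinTaylor_nonneg {n : ℕ} {ε : ℝ}
    (hcos : ∀ y, 0 ≤ y → 0 ≤ ε * (cos y - cosTaylor n y)) {x : ℝ} (hx : 0 ≤ x) :
    0 ≤ ε * (sin x - sinTaylor n x) :=
  nonneg_of_hasDerivAt_nonneg
    (fun y => ((hasDerivAt_sin y).sub (hasDerivAt_sinTaylor n y)).const_mul ε) hcos
    (by simp [sinTaylor_zero_right]) hx

theorem neg_mul_cos_sub_cosTaylor_succ_nonneg {n : ℕ} {ε : ℝ}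
    (hsin : ∀ y, 0 ≤ y → 0 ≤ ε * (sin y - sinTaylor n y)) {x : ℝ} (hx : 0 ≤ x) :
    0 ≤ -ε * (cos x - cosTaylor (n + 1) x) := by
  refine nonneg_of_hasDerivAt_nonneg
    (fun y => ((hasDerivAt_cos y).sub (hasDerivAt_cosTaylor_succ n y)).const_mul (-ε))
    (fun y hy => ?_) (by simp [cosTaylor_succ_zero_right]) hx
  linarith [hsin y hy]

theorem neg_one_pow_mul_sub_taylor_nonneg (n : ℕ) {x : ℝ} (hx : 0 ≤ x) :
    0 ≤ (-1) ^ (n + 1) * (cos x - cosTaylor (n + 1) x) ∧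
      0 ≤ (-1) ^ (n + 1) * (sin x - sinTaylor (n + 1) x) := by
  induction n generalizing x with
  | zero =>
    have hcos (y : ℝ) : 0 ≤ (-1) ^ 1 * (cos y - cosTaylor 1 y) := by
      simp [cosTaylor, cos_le_one]
    exact ⟨hcos x, mul_sin_sub_sinTaylor_nonneg (fun y _ => hcos y) hx⟩
  | succ n ih =>
    have hcos {y : ℝ} (hy : 0 ≤ y) : 0 ≤ (-1) ^ (n + 2) * (cos y - cosTaylor (n + 2) y) := by
      simpa [pow_succ] using neg_mul_cos_sub_cosTaylor_succ_nonneg (fun y hy => (ih hy).2) hy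
    exact ⟨hcos hx, mul_sin_sub_sinTaylor_nonneg (fun y hy => hcos hy) hx⟩

theorem cosTaylor_le_cos (n : ℕ) {x : ℝ} (hx : 0 ≤ x) : cosTaylor (2 * n + 2) x ≤ cos x := by
  have := (neg_one_pow_mul_sub_taylor_nonneg (2 * n + 1) hx).1
  rw [Even.neg_one_pow ⟨n + 1, by ring⟩] at this
  linarith

theorem cos_le_cosTaylor (n : ℕ) {x : ℝ} (hx : 0 ≤ x) : cos x ≤ cosTaylor (2 * n + 1) x := by
  have := (neg_one_pow_mul_sub_taylor_nonneg (2 * n) hx).1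
  rw [Odd.neg_one_pow ⟨n, rfl⟩] at this
  linarith

theorem sinTaylor_le_sin (n : ℕ) {x : ℝ} (hx : 0 ≤ x) : sinTaylor (2 * n + 2) x ≤ sin x := by
  have := (neg_one_pow_mul_sub_taylor_nonneg (2 * n + 1) hx).2
  rw [Even.neg_one_pow ⟨n + 1, by ring⟩] at this
  linarith

theorem sin_le_sinTaylor (n : ℕ) {x : ℝ} (hx : 0 ≤ x) : sin x ≤ sinTaylor (2 * n + 1) x := by
  have := (neg_one_pow_mul_sub_taylor_nonneg (2 * n) hx).2
  rw [Odd.neg_one_pow ⟨n, rfl⟩] at this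
  linarith

theorem le_mul_cos_mul_sub_sin {x : ℝ} (hx : 0 ≤ x) :
    x ^ 7 * (-17 / 315 + 29 / 5670 * x ^ 2 - 643 / 3628800 * x ^ 4 + 1 / 311040 * x ^ 6
      - 1 / 27216000 * x ^ 8) ≤ x * cos x * (1 + x ^ 2 / 3 + 2 * x ^ 4 / 15) - sin x := by
  have hcos : cosTaylor 6 x ≤ cos x := cosTaylor_le_cos 2 hx
  have hsin : sin x ≤ sinTaylor 5 x := sin_le_sinTaylor 2 hx
  have hpoly : x * cosTaylor 6 x * (1 + x ^ 2 / 3 + 2 * x ^ 4 / 15) - sinTaylor 5 x =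
      x ^ 7 * (-17 / 315 + 29 / 5670 * x ^ 2 - 643 / 3628800 * x ^ 4 + 1 / 311040 * x ^ 6
        - 1 / 27216000 * x ^ 8) := by
    simp [cosTaylor, sinTaylor, sum_range_succ, Nat.factorial]
    ring
  have hmul : 0 ≤ x * (1 + x ^ 2 / 3 + 2 * x ^ 4 / 15) := by positivity
  nlinarith [mul_le_mul_of_nonneg_left hcos hmul]

theorem le_sq_mul_sin_sub_mul_cos {x : ℝ} (hx : 0 ≤ x) :
    x ^ 7 * (8 / 15 - 16 / 315 * x ^ 2 + 1 / 567 * x ^ 4 - 331 / 9979200 * x ^ 6) ≤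
      4 * x ^ 2 * sin x - (4 * x ^ 3 + 4 * x ^ 5 / 3) * cos x := by
  have hsin : sinTaylor 6 x ≤ sin x := sinTaylor_le_sin 2 hx
  have hcos : cos x ≤ cosTaylor 5 x := cos_le_cosTaylor 2 hx
  have hpoly : 4 * x ^ 2 * sinTaylor 6 x - (4 * x ^ 3 + 4 * x ^ 5 / 3) * cosTaylor 5 x =
      x ^ 7 * (8 / 15 - 16 / 315 * x ^ 2 + 1 / 567 * x ^ 4 - 331 / 9979200 * x ^ 6) := by
    simp [cosTaylor, sinTaylor, sum_range_succ, Nat.factorial]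
    ring
  have h₁ : 0 ≤ 4 * x ^ 2 := by positivity
  have h₂ : 0 ≤ 4 * x ^ 3 + 4 * x ^ 5 / 3 := by positivity
  nlinarith [mul_le_mul_of_nonneg_left hsin h₁, mul_le_mul_of_nonneg_left hcos h₂]

theorem pi_sq_mul_add_pos {x : ℝ} (hx₀ : 0 < x) (hx : x ≤ 1.371) :
    0 < π ^ 2 * (x * cos x * (1 + x ^ 2 / 3 + 2 * x ^ 4 / 15) - sin x) +
      (4 * x ^ 2 * sin x - (4 * x ^ 3 + 4 * x ^ 5 / 3) * cos x) := by
  set p := -17 / 315 + 29 / 5670 * x ^ 2 - 643 / 3628800 * x ^ 4 + 1 / 311040 * x ^ 6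
    - 1 / 27216000 * x ^ 8 with hp
  set q := 8 / 15 - 16 / 315 * x ^ 2 + 1 / 567 * x ^ 4 - 331 / 9979200 * x ^ 6 with hq
  have hpow (n : ℕ) : x ^ n ≤ 1.371 ^ n := pow_le_pow_left₀ hx₀.le hx n
  have h2 := hpow 2
  have h6 := hpow 6
  have h8 := hpow 8
  norm_num at h2 h6 h8
  have hp_nonpos : p ≤ 0 := by nlinarith [pow_nonneg hx₀.le 4, pow_nonneg hx₀.le 8]
  have hpq : 0 < 9.87 * p + q := by nlinarith [pow_nonneg hx₀.le 4]
  have hπ : π ^ 2 < 9.87 := by nlinarith [pi_lt_d4, pi_pos]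
  have hx7 : 0 < x ^ 7 := by positivity
  calc 0 < x ^ 7 * (9.87 * p + q) := mul_pos hx7 hpq
    _ ≤ π ^ 2 * (x ^ 7 * p) + x ^ 7 * q := by
      nlinarith [mul_nonpos_of_nonneg_of_nonpos hx7.le hp_nonpos]
    _ ≤ _ := add_le_add
      (mul_le_mul_of_nonneg_left (le_mul_cos_mul_sub_sin hx₀.le) (sq_nonneg π))
      (le_sq_mul_sin_sub_mul_cos hx₀.le)

theorem stmt5 (x : ℝ) (h0 : 0 < x) (h1 : x < 1.371) :
    Real.tan x / x <
      (π ^ 2 - (4 - π ^ 2 / 3) * x ^ 2 - (4 / 3 - 2 * π ^ 2 / 15) * x ^ 4) /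
        (π ^ 2 - 4 * x ^ 2) := by
  have hπ : 3 < π := pi_gt_three
  have hD : 0 < π ^ 2 - 4 * x ^ 2 := by nlinarith
  have hcos : 0 < cos x := cos_pos_of_mem_Ioo ⟨by linarith, by linarith⟩
  rw [div_lt_div_iff₀ h0 hD, tan_eq_sin_div_cos, div_mul_eq_mul_div, div_lt_iff₀ hcos]
  linear_combination pi_sq_mul_add_pos h0 h1.le
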